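/- arXiv:2403.04702 — 2 statements merged into one kernel-verified Lean document; each statement's English description precedes it below -/
import Mathlib

section
/- Let P be a real Hilbert space and 𝒜 : P → P a bounded self-adjoint linear operator for which there exist constants 0 < m ≤ M with m‖q‖² ≤ ⟨𝒜q, q⟩ ≤ M‖q‖² for all q ∈ P. Let α, β ∈ ℝ with α ≠ 0, β ≥ 0, and β + α² < 1/M. If a sequence (eₙ)ₙ≥0 in P satisfies the Ramshaw–Mesina error recursion e_{n+1} = (I − (β + α²)𝒜) eₙ + β 𝒜 e_{n−1} for all n ≥ 1, then eₙ → 0 in P as n → ∞. -/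
open scoped RealInnerProductSpace

/-!
Writing `fₙ = β (eₙ - eₙ₋₁) + α² eₙ`, the recursion reads `eₙ₊₁ = eₙ - 𝒜 fₙ`. The energy
`Eₙ = α²/2 ‖eₙ‖² + β/2 ‖eₙ - eₙ₋₁‖²` then satisfies
`Eₙ₊₁ + (1 - M (β + α²/2)) ⟪𝒜 fₙ, fₙ⟫ ≤ Eₙ`, thanks to `‖𝒜 f‖² ≤ M ⟪𝒜 f, f⟫` (Cauchy–Schwarz for
the form `⟪𝒜 ·, ·⟫`). Hence `∑ ⟪𝒜 fₙ, fₙ⟫ < ∞`, so `fₙ → 0` by coercivity, then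
`eₙ₊₁ - eₙ = -𝒜 fₙ → 0`, and finally `α² eₙ = fₙ - β (eₙ - eₙ₋₁) → 0`.
-/

open Filter Topology

namespace ContinuousLinearMap

variable {P : Type*} [NormedAddCommGroup P] [InnerProductSpace ℝ P] {T : P →L[ℝ] P}

theorem IsPositive.real_inner_sq_le (hT : T.IsPositive) (x y : P) :
    ⟪T x, y⟫ ^ 2 ≤ ⟪T x, x⟫ * ⟪T y, y⟫ := by
  have hyx : ⟪T y, x⟫ = ⟪T x, y⟫ := by
    rw [hT.inner_left_eq_inner_right, real_inner_comm]
  have hquad : ∀ t : ℝ, 0 ≤ ⟪T y, y⟫ * (t * t) + 2 * ⟪T x, y⟫ * t + ⟪T x, x⟫ := by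
    intro t
    have h := hT.inner_nonneg_left (x + t • y)
    simp only [map_add, map_smul, inner_add_left, inner_add_right, real_inner_smul_left,
      real_inner_smul_right, hyx] at h
    linarith
  have := discrim_le_zero hquad
  rw [discrim] at this
  linarith

theorem IsPositive.norm_apply_sq_le (hT : T.IsPositive) {M : ℝ}
    (hM : ∀ y, ⟪T y, y⟫ ≤ M * ‖y‖ ^ 2) (x : P) : ‖T x‖ ^ 2 ≤ M * ⟪T x, x⟫ := by
  have hcs : ‖T x‖ ^ 2 * ‖T x‖ ^ 2 ≤ M * ⟪T x, x⟫ * ‖T x‖ ^ 2 := calc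
    ‖T x‖ ^ 2 * ‖T x‖ ^ 2 = ⟪T x, T x⟫ ^ 2 := by rw [real_inner_self_eq_norm_sq]; ring
    _ ≤ ⟪T x, x⟫ * ⟪T (T x), T x⟫ := hT.real_inner_sq_le x (T x)
    _ ≤ ⟪T x, x⟫ * (M * ‖T x‖ ^ 2) := mul_le_mul_of_nonneg_left (hM _) (hT.inner_nonneg_left x)
    _ = M * ⟪T x, x⟫ * ‖T x‖ ^ 2 := by ring
  rcases (sq_nonneg ‖T x‖).eq_or_lt with h | h
  · have hTx : T x = 0 := by simpa using h.symm
    simp [hTx]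
  · exact le_of_mul_le_mul_right hcs h

theorem tendsto_zero_of_tendsto_inner_apply_self {ι : Type*} {l : Filter ι} {u : ι → P}
    {m : ℝ} (hm : 0 < m) (hlow : ∀ q, m * ‖q‖ ^ 2 ≤ ⟪T q, q⟫)
    (h : Tendsto (fun i => ⟪T (u i), u i⟫) l (𝓝 0)) : Tendsto u l (𝓝 0) := by
  rw [tendsto_zero_iff_norm_tendsto_zero]
  refine squeeze_zero (fun i => norm_nonneg _) (fun i => ?_) (by simpa using (h.div_const m).sqrt)
  exact Real.le_sqrt_of_sq_le ((le_div_iff₀ hm).2 (by linarith [hlow (u i)]))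

end ContinuousLinearMap

theorem summable_of_add_le {E d : ℕ → ℝ} (hE : ∀ n, 0 ≤ E n) (hd : ∀ n, 0 ≤ d n)
    (h : ∀ n, E (n + 1) + d n ≤ E n) : Summable d := by
  have htel : ∀ n, ∑ i ∈ Finset.range n, d i + E n ≤ E 0 := by
    intro n
    induction n with
    | zero => simp
    | succ n ih => rw [Finset.sum_range_succ]; linarith [h n]
  exact summable_of_sum_range_le hd fun n => by linarith [htel n, hE n]

section RamshawMesina

variable {P : Type*} [NormedAddCommGroup P]

noncomputable def ramshawMesinaEnergy (α β : ℝ) (x y : P) : ℝ :=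
  α ^ 2 / 2 * ‖x‖ ^ 2 + β / 2 * ‖x - y‖ ^ 2

theorem ramshawMesinaEnergy_nonneg {α β : ℝ} (hβ : 0 ≤ β) (x y : P) :
    0 ≤ ramshawMesinaEnergy α β x y := by
  unfold ramshawMesinaEnergy
  positivity

variable [InnerProductSpace ℝ P]

def ramshawMesinaDirection (α β : ℝ) (x y : P) : P := β • (x - y) + α ^ 2 • x

variable {T : P →L[ℝ] P} {m M α β : ℝ}

theorem ramshawMesinaEnergy_step_add_le (hT : T.IsPositive)
    (hM : ∀ y, ⟪T y, y⟫ ≤ M * ‖y‖ ^ 2) (hβ : 0 ≤ β) (x y : P) :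
    ramshawMesinaEnergy α β (x - T (ramshawMesinaDirection α β x y)) x
        + (1 - M * (β + α ^ 2 / 2)) * ⟪T (ramshawMesinaDirection α β x y),
          ramshawMesinaDirection α β x y⟫
      ≤ ramshawMesinaEnergy α β x y := by
  set f := ramshawMesinaDirection α β x y
  set g := T f
  have hg : ‖g‖ ^ 2 ≤ M * ⟪g, f⟫ := hT.norm_apply_sq_le hM f
  have hgf : ⟪g, f⟫ = β * ⟪g, x - y⟫ + α ^ 2 * ⟪g, x⟫ := by
    simp only [f, ramshawMesinaDirection, inner_add_right, real_inner_smul_right]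
  have hyoung : 2 * ⟪g, x - y⟫ ≤ ‖g‖ ^ 2 + ‖x - y‖ ^ 2 := by
    nlinarith [real_inner_le_norm g (x - y), two_mul_le_add_sq ‖g‖ ‖x - y‖]
  have h1 := mul_le_mul_of_nonneg_left hyoung hβ
  have h2 := mul_le_mul_of_nonneg_left hg (by positivity : 0 ≤ α ^ 2 / 2 + β)
  have hxg : ‖x - g - x‖ = ‖g‖ := by rw [sub_sub_cancel_left, norm_neg]
  unfold ramshawMesinaEnergy
  rw [hxg, norm_sub_sq_real, real_inner_comm]
  nlinarith

theorem tendsto_zero_of_ramshawMesina_step (hT : T.IsSymmetric) (hm : 0 < m)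
    (hlow : ∀ q, m * ‖q‖ ^ 2 ≤ ⟪T q, q⟫) (hhigh : ∀ q, ⟪T q, q⟫ ≤ M * ‖q‖ ^ 2)
    (hα : α ≠ 0) (hβ : 0 ≤ β) (hcond : M * (β + α ^ 2 / 2) < 1) {e : ℕ → P}
    (hstep : ∀ n, e (n + 2) = e (n + 1) - T (ramshawMesinaDirection α β (e (n + 1)) (e n))) :
    Tendsto e atTop (𝓝 0) := by
  have hpos : T.IsPositive :=
    (T.isPositive_iff).2 ⟨hT, fun q => (by positivity : 0 ≤ m * ‖q‖ ^ 2).trans (hlow q)⟩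
  set f := fun n => ramshawMesinaDirection α β (e (n + 1)) (e n)
  have hdiss : ∀ n, ramshawMesinaEnergy α β (e (n + 2)) (e (n + 1))
      + (1 - M * (β + α ^ 2 / 2)) * ⟪T (f n), f n⟫ ≤ ramshawMesinaEnergy α β (e (n + 1)) (e n) :=
    fun n => hstep n ▸ ramshawMesinaEnergy_step_add_le hpos hhigh hβ _ _
  have hsum : Summable fun n => ⟪T (f n), f n⟫ :=
    (summable_mul_left_iff (sub_pos.2 hcond).ne').1 <| summable_of_add_le
      (E := fun n => ramshawMesinaEnergy α β (e (n + 1)) (e n))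
      (fun n => ramshawMesinaEnergy_nonneg hβ _ _)
      (fun n => mul_nonneg (sub_pos.2 hcond).le (hpos.inner_nonneg_left _)) hdiss
  have hf : Tendsto f atTop (𝓝 0) :=
    T.tendsto_zero_of_tendsto_inner_apply_self hm hlow hsum.tendsto_atTop_zero
  have hincr : Tendsto (fun n => e (n + 1) - e n) atTop (𝓝 0) := by
    refine (tendsto_add_atTop_iff_nat 1).1 ?_
    simpa [hstep] using ((T.continuous.tendsto' 0 0 (map_zero T)).comp hf).neg
  have hscaled : Tendsto (fun n => (α ^ 2)⁻¹ • (f n - β • (e (n + 1) - e n))) atTop (𝓝 0) := by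
    simpa using (hf.sub (hincr.const_smul β)).const_smul (α ^ 2)⁻¹
  refine (tendsto_add_atTop_iff_nat 1).1 (hscaled.congr fun n => ?_)
  simp only [f, ramshawMesinaDirection, add_sub_cancel_left]
  rw [smul_smul, inv_mul_cancel₀ (pow_ne_zero 2 hα), one_smul]

end RamshawMesina

theorem ramshaw_mesina_error_convergence_general
    {P : Type*} [NormedAddCommGroup P] [InnerProductSpace ℝ P]
    (𝒜 : P →L[ℝ] P) (hsa : ∀ x y : P, ⟪𝒜 x, y⟫ = ⟪x, 𝒜 y⟫)
    (m M : ℝ) (hm : 0 < m)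
    (hlow : ∀ q : P, m * ‖q‖ ^ 2 ≤ ⟪𝒜 q, q⟫)
    (hhigh : ∀ q : P, ⟪𝒜 q, q⟫ ≤ M * ‖q‖ ^ 2)
    (α β : ℝ) (hα : α ≠ 0) (hβ : 0 ≤ β) (hcond : β + α ^ 2 < 1 / M)
    (e : ℕ → P)
    (hrec : ∀ n : ℕ, 1 ≤ n →
      e (n + 1) = (e n - (β + α ^ 2) • 𝒜 (e n)) + β • 𝒜 (e (n - 1))) :
    Filter.Tendsto e Filter.atTop (nhds 0) := by
  have hM : 0 < M := one_div_pos.1 (lt_of_lt_of_le' hcond (by positivity))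
  refine tendsto_zero_of_ramshawMesina_step hsa hm hlow hhigh hα hβ ?_ fun n => ?_
  · rw [lt_div_iff₀ hM] at hcond
    nlinarith [mul_nonneg hM.le (sq_nonneg α)]
  · rw [hrec (n + 1) (by omega)]
    simp only [ramshawMesinaDirection, map_add, map_smul, map_sub, Nat.add_sub_cancel]
    module

/-- Convergence of the Ramshaw–Mesina iteration (error form): if `𝒜` is a bounded
self-adjoint operator on a real Hilbert space `P` with spectral bounds
`m‖q‖² ≤ ⟪𝒜q, q⟫ ≤ M‖q‖²` (`0 < m ≤ M`), `α ≠ 0`, `β ≥ 0`, `β + α² < 1/M`, and the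
errors satisfy `e_{n+1} = (I − (β + α²)𝒜) eₙ + β 𝒜 e_{n−1}` for `n ≥ 1`,
then `eₙ → 0`. -/
theorem ramshaw_mesina_error_convergence
    {P : Type*} [NormedAddCommGroup P] [InnerProductSpace ℝ P] [CompleteSpace P]
    (𝒜 : P →L[ℝ] P) (hsa : ∀ x y : P, ⟪𝒜 x, y⟫ = ⟪x, 𝒜 y⟫)
    (m M : ℝ) (hm : 0 < m) (hmM : m ≤ M)
    (hlow : ∀ q : P, m * ‖q‖ ^ 2 ≤ ⟪𝒜 q, q⟫)
    (hhigh : ∀ q : P, ⟪𝒜 q, q⟫ ≤ M * ‖q‖ ^ 2)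
    (α β : ℝ) (hα : α ≠ 0) (hβ : 0 ≤ β) (hcond : β + α ^ 2 < 1 / M)
    (e : ℕ → P)
    (hrec : ∀ n : ℕ, 1 ≤ n →
      e (n + 1) = (e n - (β + α ^ 2) • 𝒜 (e n)) + β • 𝒜 (e (n - 1))) :
    Filter.Tendsto e Filter.atTop (nhds 0) :=
  ramshaw_mesina_error_convergence_general 𝒜 hsa m M hm hlow hhigh α β hα hβ hcond e hrec
end

section
/- Let V and P be real Hilbert spaces, A : V → V an invertible bounded self-adjoint linear operator, B : V → P a bounded linear operator with adjoint B* : P → V, and f ∈ V. Assume the Schur complement 𝒜 = B ∘ A⁻¹ ∘ B* : P → P is self-adjoint and satisfies m‖q‖² ≤ ⟨𝒜q, q⟩ ≤ M‖q‖² for all q ∈ P with 0 < m ≤ M. Let α, β ∈ ℝ with α ≠ 0, β ≥ 0, and β + α² < 1/M. Let (u, p) ∈ V × P solve A u + B* p = f and B u = 0. If sequences (uₙ)ₙ≥1 in V and (pₙ)ₙ≥0 in P satisfy A u_{n+1} + B* pₙ = f for all n ≥ 0 and p_{n+1} − pₙ − β B(u_{n+1} − uₙ) − α² B u_{n+1}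 = 0 for all n ≥ 1, then pₙ → p in P and uₙ → u in V as n → ∞. -/
/-!
The pressure error `eₙ = pₙ - p` satisfies the two-step recursion
`eₙ₊₂ - eₙ₊₁ + β 𝒜 (eₙ₊₁ - eₙ) + α² 𝒜 eₙ₊₁ = 0`. Pairing it with the increment `eₙ₊₂ - eₙ₊₁`
shows that the energy `α² ⟪𝒜 eₙ, eₙ⟫ + β ⟪𝒜 (eₙ - eₙ₋₁), eₙ - eₙ₋₁⟫` drops by at least
`(2 - (2β + α²) M) ‖eₙ₊₁ - eₙ‖²` per step, so the increments are square summable and tend to `0`.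
The recursion then forces `𝒜 eₙ → 0`, hence `eₙ → 0` by coercivity of `𝒜`, and
`uₙ₊₁ = A⁻¹ (f - B* pₙ) → A⁻¹ (f - B* p) = u`.
-/

open Filter Topology
open scoped InnerProduct RealInnerProductSpace

theorem tendsto_atTop_zero_of_add_le_of_nonneg {E a : ℕ → ℝ} (hE : ∀ n, 0 ≤ E n)
    (ha : ∀ n, 0 ≤ a n) (h : ∀ n, E (n + 1) + a n ≤ E n) : Tendsto a atTop (𝓝 0) := by
  have hsum : ∀ n, ∑ k ∈ Finset.range n, a k + E n ≤ E 0 := by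
    intro n
    induction n with
    | zero => simp
    | succ n ih => rw [Finset.sum_range_succ]; linarith [h n]
  exact (summable_of_sum_range_le ha fun n => by linarith [hsum n, hE n]).tendsto_atTop_zero

section Coercive

variable {P : Type*} [NormedAddCommGroup P] [InnerProductSpace ℝ P] {f : P → P} {m : ℝ}

theorem mul_norm_le_norm_of_coercive (hlow : ∀ q, m * ‖q‖ ^ 2 ≤ ⟪f q, q⟫) (q : P) :
    m * ‖q‖ ≤ ‖f q‖ := by
  rcases eq_or_ne q 0 with rfl | hq
  · simp
  refine le_of_mul_le_mul_right ?_ (norm_pos_iff.mpr hq)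
  nlinarith [hlow q, real_inner_le_norm (f q) q]

theorem tendsto_zero_of_coercive {ι : Type*} {l : Filter ι} {e : ι → P} (hm : 0 < m)
    (hlow : ∀ q, m * ‖q‖ ^ 2 ≤ ⟪f q, q⟫) (he : Tendsto (fun i => f (e i)) l (𝓝 0)) :
    Tendsto e l (𝓝 0) := by
  refine squeeze_zero_norm (fun i => ?_) (by simpa using he.norm.const_mul m⁻¹)
  rw [le_inv_mul_iff₀ hm]
  exact mul_norm_le_norm_of_coercive hlow (e i)

end Coercive

section TwoStep

variable {P : Type*} [NormedAddCommGroup P] [InnerProductSpace ℝ P] {T : P →L[ℝ] P}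

theorem LinearMap.IsSymmetric.inner_map_add_add {T : P →ₗ[ℝ] P} (hT : T.IsSymmetric)
    (x y : P) : ⟪T (x + y), x + y⟫ = ⟪T x, x⟫ + 2 * ⟪T x, y⟫ + ⟪T y, y⟫ := by
  rw [map_add, inner_add_left, inner_add_right, inner_add_right, hT y x, real_inner_comm (T x) y]
  ring

/-- Lyapunov function of the iteration `z = y - β • T (y - x) - γ • T y`, evaluated at two
consecutive iterates `x, y`. -/
def twoStepEnergy (T : P →L[ℝ] P) (β γ : ℝ) (x y : P) : ℝ :=
  γ * ⟪T y, y⟫ + β * ⟪T (y - x), y - x⟫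

theorem twoStepEnergy_nonneg (hT : T.IsPositive) {β γ : ℝ} (hβ : 0 ≤ β) (hγ : 0 ≤ γ)
    (x y : P) : 0 ≤ twoStepEnergy T β γ x y :=
  add_nonneg (mul_nonneg hγ (hT.inner_nonneg_left y))
    (mul_nonneg hβ (hT.inner_nonneg_left (y - x)))

theorem twoStepEnergy_add_le (hT : T.IsPositive) {M β γ : ℝ}
    (hM : ∀ q, ⟪T q, q⟫ ≤ M * ‖q‖ ^ 2) (hβ : 0 ≤ β) (hγ : 0 ≤ γ) {x y z : P}
    (h : z - y + β • T (y - x) + γ • T y = 0) :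
    twoStepEnergy T β γ y z + (2 - (2 * β + γ) * M) * ‖z - y‖ ^ 2 ≤
      twoStepEnergy T β γ x y := by
  have hsymm : ∀ a b : P, ⟪T (a + b), a + b⟫ = ⟪T a, a⟫ + 2 * ⟪T a, b⟫ + ⟪T b, b⟫ :=
    hT.isSymmetric.inner_map_add_add
  set d := z - y
  have hpair : ‖d‖ ^ 2 + β * ⟪T (y - x), d⟫ + γ * ⟪T y, d⟫ = 0 := by
    simpa [inner_add_left, real_inner_smul_left, real_inner_self_eq_norm_sq]
      using congrArg (⟪·, d⟫) h
  have hz : ⟪T z, z⟫ = ⟪T y, y⟫ + 2 * ⟪T y, d⟫ + ⟪T d, d⟫ := by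
    simpa [d] using hsymm y d
  have hcross : 0 ≤ ⟪T (y - x), y - x⟫ + 2 * ⟪T (y - x), d⟫ + ⟪T d, d⟫ := by
    simpa only [hsymm] using hT.inner_nonneg_left (y - x + d)
  have hd : (2 * β + γ) * ⟪T d, d⟫ ≤ (2 * β + γ) * (M * ‖d‖ ^ 2) :=
    mul_le_mul_of_nonneg_left (hM d) (by positivity)
  unfold twoStepEnergy
  nlinarith [mul_nonneg hβ hcross]

theorem tendsto_zero_of_two_step_recurrence {m M β γ : ℝ} (hT : T.IsSymmetric) (hm : 0 < m)
    (hlow : ∀ q, m * ‖q‖ ^ 2 ≤ ⟪T q, q⟫) (hhigh : ∀ q, ⟪T q, q⟫ ≤ M * ‖q‖ ^ 2)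
    (hβ : 0 ≤ β) (hγ : 0 < γ) (hcond : (2 * β + γ) * M < 2) {e : ℕ → P}
    (he : ∀ n, e (n + 2) - e (n + 1) + β • T (e (n + 1) - e n) + γ • T (e (n + 1)) = 0) :
    Tendsto e atTop (𝓝 0) := by
  have hpos : T.IsPositive :=
    T.isPositive_iff.mpr ⟨hT, fun q => le_trans (by positivity) (hlow q)⟩
  have hdiss := tendsto_atTop_zero_of_add_le_of_nonneg
    (fun n => twoStepEnergy_nonneg hpos hβ hγ.le (e n) (e (n + 1)))
    (fun n => by have := sub_pos.mpr hcond; positivity)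
    (fun n => twoStepEnergy_add_le hpos hhigh hβ hγ.le (he n))
  have hd : Tendsto (fun n => e (n + 1) - e n) atTop (𝓝 0) := by
    refine (tendsto_add_atTop_iff_nat 1).mp (tendsto_zero_iff_norm_tendsto_zero.mpr ?_)
    have := (hdiss.const_mul (2 - (2 * β + γ) * M)⁻¹).sqrt
    simpa [inv_mul_cancel_left₀ (sub_pos.mpr hcond).ne', Real.sqrt_sq (norm_nonneg _)]
      using this
  have hTe : Tendsto (fun n => T (e (n + 1))) atTop (𝓝 0) := by
    have hlim : Tendsto (fun n => (-γ⁻¹) • (e (n + 2) - e (n + 1) + β • T (e (n + 1) - e n)))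
        atTop (𝓝 0) := by
      simpa using ((hd.comp (tendsto_add_atTop_nat 1)).add
        (((T.continuous.tendsto 0).comp hd).const_smul β)).const_smul (-γ⁻¹)
    refine hlim.congr fun n => ?_
    rw [eq_neg_of_add_eq_zero_left (he n), smul_neg, neg_smul, neg_neg, smul_smul,
      inv_mul_cancel₀ hγ.ne', one_smul]
  exact (tendsto_add_atTop_iff_nat 1).mp (tendsto_zero_of_coercive hm hlow hTe)

end TwoStep

section SaddlePoint

variable {V P : Type*} [NormedAddCommGroup V] [InnerProductSpace ℝ V] [CompleteSpace V]
  [NormedAddCommGroup P] [InnerProductSpace ℝ P] [CompleteSpace P]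
  {A : V ≃L[ℝ] V} {B : V →L[ℝ] P} {f u x : V} {p q : P}

theorem apply_eq_neg_schur_of_add_adjoint_eq (hu : A u + (B†) p = f) (hdiv : B u = 0)
    (hx : A x + (B†) q = f) : B x = -(B ∘L (A.symm : V →L[ℝ] V) ∘L B†) (q - p) := by
  have hx' : x = u - A.symm ((B†) (q - p)) := by
    apply A.injective
    rw [map_sub, A.apply_symm_apply, map_sub]
    linear_combination (norm := abel) hx - hu
  simp [hx', hdiv]

end SaddlePoint

theorem ramshaw_mesina_saddle_point_convergence_general
    {V P : Type*} [NormedAddCommGroup V] [InnerProductSpace ℝ V] [CompleteSpace V]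
    [NormedAddCommGroup P] [InnerProductSpace ℝ P] [CompleteSpace P]
    (A : V ≃L[ℝ] V)
    (B : V →L[ℝ] P) (f : V)
    (𝒜 : P → P)
    (h𝒜 : ∀ q : P, 𝒜 q = B (A.symm (ContinuousLinearMap.adjoint B q)))
    (h𝒜sa : ∀ q r : P, ⟪𝒜 q, r⟫ = ⟪q, 𝒜 r⟫)
    (m M : ℝ) (hm : 0 < m)
    (hlow : ∀ q : P, m * ‖q‖ ^ 2 ≤ ⟪𝒜 q, q⟫)
    (hhigh : ∀ q : P, ⟪𝒜 q, q⟫ ≤ M * ‖q‖ ^ 2)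
    (α β : ℝ) (hα : α ≠ 0) (hβ : 0 ≤ β) (hcond : β + α ^ 2 < 1 / M)
    (u : V) (p : P)
    (hu : A u + ContinuousLinearMap.adjoint B p = f) (hdiv : B u = 0)
    (uSeq : ℕ → V) (pSeq : ℕ → P)
    (hstep1 : ∀ n : ℕ,
      A (uSeq (n + 1)) + ContinuousLinearMap.adjoint B (pSeq n) = f)
    (hstep2 : ∀ n : ℕ, 1 ≤ n →
      pSeq (n + 1) - pSeq n - β • B (uSeq (n + 1) - uSeq n)
        - α ^ 2 • B (uSeq (n + 1)) = 0) :
    Filter.Tendsto pSeq Filter.atTop (nhds p) ∧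
    Filter.Tendsto uSeq Filter.atTop (nhds u) := by
  set S := B ∘L (A.symm : V →L[ℝ] V) ∘L B†
  obtain rfl : 𝒜 = S := funext h𝒜
  have hM : 0 < M := one_div_pos.mp (by linarith [sq_pos_of_ne_zero hα])
  have hcond' : (2 * β + α ^ 2) * M < 2 := by
    nlinarith [(lt_div_iff₀ hM).mp hcond, mul_nonneg (sq_nonneg α) hM.le]
  have hBu (n : ℕ) : B (uSeq (n + 1)) = -S (pSeq n - p) :=
    apply_eq_neg_schur_of_add_adjoint_eq hu hdiv (hstep1 n)
  have hp : Tendsto (fun n => pSeq n - p) atTop (𝓝 0) := by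
    refine tendsto_zero_of_two_step_recurrence h𝒜sa hm hlow hhigh hβ (sq_pos_of_ne_zero hα)
      hcond' fun n => ?_
    have h := hstep2 (n + 1) (Nat.le_add_left 1 n)
    rw [map_sub B, hBu, hBu] at h
    simp only [map_sub] at h ⊢
    linear_combination (norm := module) h
  have hp' := tendsto_sub_nhds_zero_iff.mp hp
  refine ⟨hp', (tendsto_add_atTop_iff_nat 1).mp ?_⟩
  have hlim : A.symm (f - (B†) p) = u := by rw [← hu]; simp
  have huSeq (n : ℕ) : uSeq (n + 1) = A.symm (f - (B†) (pSeq n)) := by rw [← hstep1 n]; simp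
  have hcont : Continuous fun q => A.symm (f - (B†) q) := by fun_prop
  simpa only [Function.comp_def, huSeq, hlim] using (hcont.tendsto p).comp hp'

/-- Convergence of the Ramshaw–Mesina iteration for the abstract saddle point problem:
with Schur complement `𝒜 = B A⁻¹ B*` self-adjoint and spectrally bounded,
`α ≠ 0`, `β ≥ 0`, `β + α² < 1/M`, the iterates of
Step 1: `A u_{n+1} + B* pₙ = f`, Step 2: `p_{n+1} − pₙ − β B(u_{n+1} − uₙ) − α² B u_{n+1} = 0`
converge to the exact solution `(u, p)` of `A u + B* p = f`, `B u = 0`. -/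
theorem ramshaw_mesina_saddle_point_convergence
    {V P : Type*} [NormedAddCommGroup V] [InnerProductSpace ℝ V] [CompleteSpace V]
    [NormedAddCommGroup P] [InnerProductSpace ℝ P] [CompleteSpace P]
    (A : V ≃L[ℝ] V) (hAsa : ∀ x y : V, ⟪A x, y⟫ = ⟪x, A y⟫)
    (B : V →L[ℝ] P) (f : V)
    (𝒜 : P → P)
    (h𝒜 : ∀ q : P, 𝒜 q = B (A.symm (ContinuousLinearMap.adjoint B q)))
    (h𝒜sa : ∀ q r : P, ⟪𝒜 q, r⟫ = ⟪q, 𝒜 r⟫)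
    (m M : ℝ) (hm : 0 < m) (hmM : m ≤ M)
    (hlow : ∀ q : P, m * ‖q‖ ^ 2 ≤ ⟪𝒜 q, q⟫)
    (hhigh : ∀ q : P, ⟪𝒜 q, q⟫ ≤ M * ‖q‖ ^ 2)
    (α β : ℝ) (hα : α ≠ 0) (hβ : 0 ≤ β) (hcond : β + α ^ 2 < 1 / M)
    (u : V) (p : P)
    (hu : A u + ContinuousLinearMap.adjoint B p = f) (hdiv : B u = 0)
    (uSeq : ℕ → V) (pSeq : ℕ → P)
    (hstep1 : ∀ n : ℕ,
      A (uSeq (n + 1)) + ContinuousLinearMap.adjoint B (pSeq n) = f)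
    (hstep2 : ∀ n : ℕ, 1 ≤ n →
      pSeq (n + 1) - pSeq n - β • B (uSeq (n + 1) - uSeq n)
        - α ^ 2 • B (uSeq (n + 1)) = 0) :
    Filter.Tendsto pSeq Filter.atTop (nhds p) ∧
    Filter.Tendsto uSeq Filter.atTop (nhds u) :=
  ramshaw_mesina_saddle_point_convergence_general A B f 𝒜 h𝒜 h𝒜sa m M hm hlow hhigh α β hα hβ hcond
    u p hu hdiv uSeq pSeq hstep1 hstep2
end
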